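/- Let T be a rooted phylogenetic X-tree, L a distinguished minimal topological lasso for T, and Y ⊆ X with |Y| ≥ 3. Then the restriction L|_Y = {ab ∈ L : a, b ∈ Y} is a distinguished minimal topological lasso for the restricted tree T|_Y if and only if the induced subgraph Γ(L|_Y) of Γ(L) on Y is connected. -/

import Mathlib

open scoped Classical

/-- A rooted `X`-tree on vertex type `V`: a finite rooted tree encoded by a parent
function, whose leaves (the vertices with no children) are bijectively labelled by `X`. -/
structure XTree (X V : Type) where
  root : V
  parent : V → V
  parent_root : parent root = root
  reaches : ∀ v : V, ∃ n : ℕ, parent^[n] v = root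
  leaf : X → V
  leaf_inj : Function.Injective leaf
  leaf_iff : ∀ v : V, (∀ w : V, parent w = v → w = v) ↔ v ∈ Set.range leaf

namespace XTree

variable {X V : Type}

/-- The children of a vertex. -/
def children (T : XTree X V) (v : V) : Set V := {w | T.parent w = v ∧ w ≠ v}

def IsLeaf (T : XTree X V) (v : V) : Prop := v ∈ Set.range T.leaf

def Interior (T : XTree X V) (v : V) : Prop := ¬ T.IsLeaf v

/-- Phylogenetic: root has at least two children, and no non-root vertex has exactly
one child (no degree-two vertices apart from possibly the root). -/
def IsPhylo (T : XTree X V) : Prop :=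
  2 ≤ (T.children T.root).ncard ∧
    ∀ v : V, v ≠ T.root → T.Interior v → 2 ≤ (T.children v).ncard

/-- `T.Desc v w` : `w` is a descendant of `v` (or equal to `v`). -/
def Desc (T : XTree X V) (v w : V) : Prop := ∃ n : ℕ, T.parent^[n] w = v

/-- The set of leaf labels below a vertex. -/
def leafSet (T : XTree X V) (v : V) : Set X := {x | T.Desc v (T.leaf x)}

/-- `v` is the last common ancestor of the set `S` of vertices. -/
def IsLCA (T : XTree X V) (v : V) (S : Set V) : Prop :=
  (∀ w ∈ S, T.Desc v w) ∧ ∀ u : V, (∀ w ∈ S, T.Desc u w) → T.Desc u v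

/-- Not a star tree: some interior vertex other than the root. -/
def NonDegenerate (T : XTree X V) : Prop := ∃ v : V, T.Interior v ∧ v ≠ T.root

end XTree

/-- A cord: a 2-element subset of `X`. -/
def IsCord {X : Type} (c : Set X) : Prop := ∃ a b : X, a ≠ b ∧ c = {a, b}

/-- The graph `Γ(L)` with vertex set `X` and edge set `L`. -/
def cordGraph {X : Type} (L : Set (Set X)) : SimpleGraph X where
  Adj a b := a ≠ b ∧ ({a, b} : Set X) ∈ L
  symm := by
    constructor
    intro a b h
    exact ⟨Ne.symm h.1, by rw [Set.pair_comm]; exact h.2⟩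
  loopless := by constructor; intro a h; exact h.1 rfl

/-- Topological lasso, via the child-edge graph characterization: for every interior
vertex, any two distinct child subtrees are joined by a cord of `L`. -/
def XTree.IsTopoLasso {X V : Type} (T : XTree X V) (L : Set (Set X)) : Prop :=
  ∀ v c₁ c₂ : V, c₁ ∈ T.children v → c₂ ∈ T.children v → c₁ ≠ c₂ →
    ∃ a b : X, a ∈ T.leafSet c₁ ∧ b ∈ T.leafSet c₂ ∧ ({a, b} : Set X) ∈ L

/-- Set-inclusion minimal topological lasso. -/
def XTree.IsMinTopoLasso {X V : Type} (T : XTree X V) (L : Set (Set X)) : Prop :=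
  T.IsTopoLasso L ∧ ∀ L' ⊆ L, T.IsTopoLasso L' → L' = L

/-- A nonempty vertex set inducing a connected subgraph with no cut vertex. -/
def GoodSet {α : Type} (G : SimpleGraph α) (B : Set α) : Prop :=
  B.Nonempty ∧ (G.induce B).Connected ∧
    ∀ v ∈ B, (B \ {v}).Nonempty → (G.induce (B \ {v})).Connected

/-- A block: a maximal connected induced subgraph without a cut vertex. -/
def IsBlock {α : Type} (G : SimpleGraph α) (B : Set α) : Prop :=
  GoodSet G B ∧ ∀ C : Set α, GoodSet G C → B ⊆ C → B = C

/-- A block graph: every block is a clique. -/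
def IsBlockGraph {α : Type} (G : SimpleGraph α) : Prop :=
  ∀ B : Set α, IsBlock G B → G.IsClique B

/-- A cut vertex: deleting it disconnects the graph. -/
def IsCutVtx {α : Type} (G : SimpleGraph α) (v : α) : Prop :=
  ¬ (G.induce {w | w ≠ v}).Connected

/-- Claw-free: no induced `K_{1,3}`. -/
def ClawFree {α : Type} (G : SimpleGraph α) : Prop :=
  ¬ ∃ v a b c : α, a ≠ b ∧ a ≠ c ∧ b ≠ c ∧
    G.Adj v a ∧ G.Adj v b ∧ G.Adj v c ∧ ¬ G.Adj a b ∧ ¬ G.Adj a c ∧ ¬ G.Adj b c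

/-- The child-edge graph `G(L,v)`: vertices are the children of `v` (equivalently
the child edges of `v`), two of them adjacent if a cord of `L` joins their subtrees. -/
def childGraph {X V : Type} (T : XTree X V) (L : Set (Set X)) (v : V) :
    SimpleGraph {c : V // c ∈ T.children v} where
  Adj c₁ c₂ := c₁ ≠ c₂ ∧ ∃ a b : X,
    a ∈ T.leafSet (c₁ : V) ∧ b ∈ T.leafSet (c₂ : V) ∧ ({a, b} : Set X) ∈ L
  symm := by
    constructor
    rintro c₁ c₂ ⟨h, a, b, ha, hb, hm⟩
    exact ⟨Ne.symm h, b, a, hb, ha, by rw [Set.pair_comm]; exact hm⟩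
  loopless := by constructor; rintro c ⟨h, -⟩; exact h rfl

/-- `cl(T)`: the clusters of non-root interior vertices. -/
def clSet {X V : Type} (T : XTree X V) : Set (Set X) :=
  {A | ∃ v : V, v ≠ T.root ∧ T.Interior v ∧ A = T.leafSet v}

/-- A cluster marker map for `T` and the ordering of `X`:
`f A` is the `σ`-least element of `A` not used as marker of a proper subcluster. -/
def IsClusterMarker {X V : Type} [LinearOrder X] (T : XTree X V) (f : Set X → X) : Prop :=
  ∀ A ∈ clSet T,
    ((∃ B ∈ clSet T, B ⊂ A) →
      IsLeast (A \ {y | ∃ B ∈ clSet T, B ⊂ A ∧ f B = y}) (f A)) ∧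
    ((¬ ∃ B ∈ clSet T, B ⊂ A) → IsLeast A (f A))

/-- The marker of a child `c` of an interior vertex: the label of `c` if `c` is a leaf,
and `f (L(c))` if `c` is interior. -/
def markRel {X V : Type} (T : XTree X V) (f : Set X → X) (c : V) (a : X) : Prop :=
  T.leaf a = c ∨ (T.Interior c ∧ a = f (T.leafSet c))

/-- `L_{(T,f)}(v)`: all cords between markers of distinct children of `v`. -/
def lassoAt {X V : Type} (T : XTree X V) (f : Set X → X) (v : V) : Set (Set X) :=
  {c | ∃ c₁ c₂ : V, c₁ ∈ T.children v ∧ c₂ ∈ T.children v ∧ c₁ ≠ c₂ ∧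
    ∃ a b : X, markRel T f c₁ a ∧ markRel T f c₂ b ∧ c = {a, b}}

/-- `L_{(T,f)}`: the union over all interior vertices of `L_{(T,f)}(v)`. -/
def lassoFull {X V : Type} (T : XTree X V) (f : Set X → X) : Set (Set X) :=
  {c | ∃ v : V, T.Interior v ∧ c ∈ lassoAt T f v}

/-- An equidistant proper edge-weighting of `T`, encoded by the height function
`t v` = distance from `v` to any leaf below it (so all leaves are equidistant
from the root); properness: interior edges have positive weight. -/
def EquidistantProper {X V : Type} (T : XTree X V) (t : V → ℝ) : Prop :=
  (∀ x : X, t (T.leaf x) = 0) ∧ (∀ v : V, t v ≤ t (T.parent v)) ∧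
    ∀ v : V, v ≠ T.root → T.Interior v → t v < t (T.parent v)

/-- Equivalence of two `X`-trees: a root-, parent- and labelling-preserving bijection. -/
def TreeEquiv {X V V' : Type} (T : XTree X V) (T' : XTree X V') : Prop :=
  ∃ φ : V ≃ V', φ T.root = T'.root ∧ (∀ v, φ (T.parent v) = T'.parent (φ v)) ∧
    ∀ x, φ (T.leaf x) = T'.leaf x

/-- `S` is (equivalent to) the restriction `T|_Y`: the clusters of `S` are exactly the
nonempty traces on `Y` of the clusters of `T`. -/
def IsRestriction {X : Type} (Y : Set X) {V W : Type}
    (T : XTree X V) (S : XTree (↥Y) W) : Prop :=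
  ∀ A : Set X, A ⊆ Y →
    ((∃ w : W, A = Subtype.val '' S.leafSet w) ↔ (A.Nonempty ∧ ∃ v : V, A = T.leafSet v ∩ Y))

/-- The restriction `L|_Y` of a set of cords of `X` to cords of `Y`. -/
def restrictLasso {X : Type} (Y : Set X) (L : Set (Set X)) : Set (Set ↥Y) :=
  {c | ∃ a b : ↥Y, a ≠ b ∧ c = {a, b} ∧ ({(a : X), (b : X)} : Set X) ∈ L}

/-!
A cord `ab` of `L` crosses the tree at the last common ancestor `u` of `a` and `b`, between the
children `c₁`, `c₂` of `u` above them; by minimality it is the only cord of `L` between the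
subtrees of `c₁` and `c₂`. Restriction to `Y` matches crossings: if `ab` crosses `T|_Y` between
`d₁` and `d₂` and crosses `T` between `c₁` and `c₂`, the cluster of `d₁` is the trace on `Y` of
the cluster of `c₁`. Hence `L|_Y` is a minimal topological lasso for `T|_Y` once the cord
between any two sibling subtrees of `T` that both meet `Y` has its endpoints in `Y`.

This is where connectivity of `Γ(L|_Y)` enters. If the endpoint `m₁` of the cord `m₁m₂` were
outside `Y`, a path inside the first subtree from `m₁` to `Y`, a path in `Γ(L|_Y)` and a path
inside the second subtree would close a cycle through `m₁`, its neighbour `x` on the first path,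
and `m₂`. Cycles of a block graph span cliques, so `xm₂` would be a second cord between the two
subtrees. Conversely the cord graph of a topological lasso is connected, and claw-free block
graphs are closed under induced subgraphs.
-/

namespace XTree

variable {X V : Type} {T : XTree X V}

theorem eq_root_of_isPeriodicPt {k : ℕ} {v : V} (hk : 0 < k)
    (hv : Function.IsPeriodicPt T.parent k v) : v = T.root := by
  obtain ⟨n, hn⟩ := T.reaches v
  calc v = T.parent^[k * n] v := (hv.mul_const n).eq.symm
    _ = T.parent^[k * n - n] (T.parent^[n] v) := by
      rw [← Function.iterate_add_apply, Nat.sub_add_cancel (Nat.le_mul_of_pos_left n hk)]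
    _ = T.root := by rw [hn, Function.iterate_fixed T.parent_root]

theorem desc_refl (v : V) : T.Desc v v := ⟨0, rfl⟩

theorem desc_trans {u v w : V} (huv : T.Desc u v) (hvw : T.Desc v w) : T.Desc u w := by
  obtain ⟨n, hn⟩ := huv
  obtain ⟨m, hm⟩ := hvw
  exact ⟨n + m, by rw [Function.iterate_add_apply, hm, hn]⟩

theorem desc_antisymm {v w : V} (hvw : T.Desc v w) (hwv : T.Desc w v) : v = w := by
  obtain ⟨n, hn⟩ := hvw
  obtain ⟨m, hm⟩ := hwv
  have hper : Function.IsPeriodicPt T.parent (n + m) v := by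
    rw [Function.IsPeriodicPt, Function.IsFixedPt, Function.iterate_add_apply, hm, hn]
  rcases Nat.eq_zero_or_pos (n + m) with h0 | hpos
  · rw [← hm, show m = 0 by omega, Function.iterate_zero_apply]
  · rw [← hm, eq_root_of_isPeriodicPt hpos hper, Function.iterate_fixed T.parent_root]

theorem desc_total {u v w : V} (hu : T.Desc u w) (hv : T.Desc v w) :
    T.Desc u v ∨ T.Desc v u := by
  obtain ⟨n, hn⟩ := hu
  obtain ⟨m, hm⟩ := hv
  rcases le_total n m with h | h
  · exact Or.inr ⟨m - n, by rw [← hn, ← Function.iterate_add_apply, Nat.sub_add_cancel h, hm]⟩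
  · exact Or.inl ⟨n - m, by rw [← hm, ← Function.iterate_add_apply, Nat.sub_add_cancel h, hn]⟩

theorem desc_of_mem_children {v c : V} (hc : c ∈ T.children v) : T.Desc v c :=
  ⟨1, hc.1⟩

theorem desc_of_desc_of_mem_children {u v c : V} (hc : c ∈ T.children v) (huc : T.Desc u c)
    (hne : u ≠ c) : T.Desc u v := by
  obtain ⟨_ | n, hn⟩ := huc
  · exact absurd hn.symm hne
  · rw [Function.iterate_succ_apply, hc.1] at hn
    exact ⟨n, hn⟩

theorem exists_mem_children_desc {v u : V} (hvu : T.Desc v u) (hne : u ≠ v) :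
    ∃ c ∈ T.children v, T.Desc c u := by
  obtain ⟨n, hn⟩ := hvu
  induction n generalizing u with
  | zero => exact absurd hn hne
  | succ n ih =>
    rw [Function.iterate_succ_apply] at hn
    by_cases hp : T.parent u = v
    · exact ⟨u, ⟨hp, hne⟩, desc_refl u⟩
    · obtain ⟨c, hc, hcu⟩ := ih hp hn
      exact ⟨c, hc, desc_trans hcu ⟨1, rfl⟩⟩

theorem leafSet_mono {u v : V} (h : T.Desc u v) : T.leafSet v ⊆ T.leafSet u :=
  fun _ hx => desc_trans h hx

theorem disjoint_leafSet_of_mem_children {v c₁ c₂ : V} (hc₁ : c₁ ∈ T.children v)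
    (hc₂ : c₂ ∈ T.children v) (hne : c₁ ≠ c₂) : Disjoint (T.leafSet c₁) (T.leafSet c₂) := by
  have key : ∀ {d₁ d₂ : V}, d₁ ∈ T.children v → d₂ ∈ T.children v → d₁ ≠ d₂ →
      ¬ T.Desc d₁ d₂ := fun hd₁ hd₂ hne hd =>
    hd₁.2 (desc_antisymm (desc_of_desc_of_mem_children hd₂ hd hne) (desc_of_mem_children hd₁))
  refine Set.disjoint_left.2 fun x hx₁ hx₂ => ?_
  rcases desc_total hx₁ hx₂ with h | h
  · exact key hc₁ hc₂ hne h
  · exact key hc₂ hc₁ hne.symm h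

theorem eq_leaf_of_desc {x : X} {w : V} (h : T.Desc (T.leaf x) w) : w = T.leaf x := by
  obtain ⟨n, hn⟩ := h
  induction n generalizing w with
  | zero => exact hn
  | succ n ih =>
    rw [Function.iterate_succ_apply'] at hn
    exact ih ((T.leaf_iff _).2 ⟨x, rfl⟩ _ hn)

theorem leafSet_leaf (x : X) : T.leafSet (T.leaf x) = {x} := by
  ext y
  exact ⟨fun h => T.leaf_inj (eq_leaf_of_desc h), fun h => h ▸ desc_refl _⟩

theorem card_desc_lt_of_mem_children [Finite V] {v c : V} (hc : c ∈ T.children v) :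
    {w | T.Desc c w}.ncard < {w | T.Desc v w}.ncard := by
  refine Set.ncard_lt_ncard ⟨fun w hw => desc_trans (desc_of_mem_children hc) hw, ?_⟩
  exact fun hsub => hc.2 (desc_antisymm (hsub (desc_refl v)) (desc_of_mem_children hc))

variable (T) in
theorem children_induction [Finite V] {motive : V → Prop}
    (step : ∀ v, (∀ c ∈ T.children v, motive c) → motive v) (v : V) : motive v := by
  induction v using (measure fun v => {w | T.Desc v w}.ncard).wf.induction with
  | h v ih => exact step v fun c hc => ih c (card_desc_lt_of_mem_children hc)

variable (T) in
theorem leafSet_nonempty [Finite V] (v : V) : (T.leafSet v).Nonempty := by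
  induction v using T.children_induction with
  | step v ih =>
    by_cases hv : T.IsLeaf v
    · obtain ⟨x, rfl⟩ := hv
      exact ⟨x, desc_refl _⟩
    · obtain ⟨c, hcv, hne⟩ : ∃ c, T.parent c = v ∧ c ≠ v := by
        simpa using mt (T.leaf_iff v).1 hv
      obtain ⟨x, hx⟩ := ih c ⟨hcv, hne⟩
      exact ⟨x, desc_trans (desc_of_mem_children ⟨hcv, hne⟩) hx⟩

theorem exists_mem_children_of_mem_leafSet {v : V} {a b : X} (ha : a ∈ T.leafSet v)
    (hb : b ∈ T.leafSet v) (hab : a ≠ b) : ∃ c ∈ T.children v, a ∈ T.leafSet c := by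
  refine exists_mem_children_desc ha fun hv => hab ?_
  rw [← hv, leafSet_leaf] at hb
  exact hb.symm

/-- `u` is the last common ancestor of `a` and `b`, and `c₁`, `c₂` are the children of `u` above
them. -/
structure CrossAt (T : XTree X V) (a b : X) (u c₁ c₂ : V) : Prop where
  mem_children_left : c₁ ∈ T.children u
  mem_children_right : c₂ ∈ T.children u
  ne : c₁ ≠ c₂
  mem_left : a ∈ T.leafSet c₁
  mem_right : b ∈ T.leafSet c₂

namespace CrossAt

variable {a b : X} {u c₁ c₂ : V}

theorem symm (h : T.CrossAt a b u c₁ c₂) : T.CrossAt b a u c₂ c₁ :=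
  ⟨h.mem_children_right, h.mem_children_left, h.ne.symm, h.mem_right, h.mem_left⟩

theorem disjoint (h : T.CrossAt a b u c₁ c₂) : Disjoint (T.leafSet c₁) (T.leafSet c₂) :=
  disjoint_leafSet_of_mem_children h.mem_children_left h.mem_children_right h.ne

theorem not_mem_left (h : T.CrossAt a b u c₁ c₂) : b ∉ T.leafSet c₁ :=
  h.disjoint.notMem_of_mem_right h.mem_right

theorem ne_of_mem (h : T.CrossAt a b u c₁ c₂) : a ≠ b :=
  fun hab => h.not_mem_left (hab ▸ h.mem_left)

theorem desc_of_mem {z : V} (h : T.CrossAt a b u c₁ c₂) (ha : a ∈ T.leafSet z)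
    (hb : b ∉ T.leafSet z) : T.Desc c₁ z := by
  rcases desc_total h.mem_left ha with hc | hz
  · exact hc
  by_cases hzc : z = c₁
  · exact hzc ▸ desc_refl z
  exact absurd (leafSet_mono (desc_of_desc_of_mem_children h.mem_children_left hz hzc)
    (leafSet_mono (desc_of_mem_children h.mem_children_right) h.mem_right)) hb

theorem unique {u' c₁' c₂' : V} (h : T.CrossAt a b u c₁ c₂) (h' : T.CrossAt a b u' c₁' c₂') :
    u = u' ∧ c₁ = c₁' ∧ c₂ = c₂' := by
  have h₁ : c₁ = c₁' := desc_antisymm (h.desc_of_mem h'.mem_left h'.not_mem_left)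
    (h'.desc_of_mem h.mem_left h.not_mem_left)
  have h₂ : c₂ = c₂' := desc_antisymm (h.symm.desc_of_mem h'.mem_right h'.symm.not_mem_left)
    (h'.symm.desc_of_mem h.mem_right h.symm.not_mem_left)
  refine ⟨?_, h₁, h₂⟩
  rw [← h.mem_children_left.1, ← h'.mem_children_left.1, h₁]

end CrossAt

variable [Finite V]

theorem exists_crossAt {a b : X} (hab : a ≠ b) : ∃ u c₁ c₂, T.CrossAt a b u c₁ c₂ := by
  suffices h : ∀ v, a ∈ T.leafSet v → b ∈ T.leafSet v → ∃ u c₁ c₂, T.CrossAt a b u c₁ c₂ from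
    h T.root (T.reaches _) (T.reaches _)
  intro v
  induction v using T.children_induction with
  | step v ih =>
    intro ha hb
    obtain ⟨c₁, hc₁, ha₁⟩ := exists_mem_children_of_mem_leafSet ha hb hab
    obtain ⟨c₂, hc₂, hb₂⟩ := exists_mem_children_of_mem_leafSet hb ha hab.symm
    by_cases hc : c₁ = c₂
    · exact ih c₁ hc₁ ha₁ (hc ▸ hb₂)
    · exact ⟨v, c₁, c₂, hc₁, hc₂, hc, ha₁, hb₂⟩

theorem IsTopoLasso.exists_walk {L : Set (Set X)} (hL : T.IsTopoLasso L) (v : V) {a b : X}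
    (ha : a ∈ T.leafSet v) (hb : b ∈ T.leafSet v) :
    ∃ p : (cordGraph L).Walk a b, ∀ z ∈ p.support, z ∈ T.leafSet v := by
  induction v using T.children_induction generalizing a b with
  | step v ih =>
    by_cases hab : a = b
    · subst hab
      exact ⟨.nil, by simpa using ha⟩
    obtain ⟨c₁, hc₁, ha₁⟩ := exists_mem_children_of_mem_leafSet ha hb hab
    obtain ⟨c₂, hc₂, hb₂⟩ := exists_mem_children_of_mem_leafSet hb ha (Ne.symm hab)
    have below : ∀ {c}, c ∈ T.children v → T.leafSet c ⊆ T.leafSet v :=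
      fun hc => leafSet_mono (desc_of_mem_children hc)
    by_cases hc : c₁ = c₂
    · obtain ⟨p, hp⟩ := ih c₁ hc₁ ha₁ (hc ▸ hb₂)
      exact ⟨p, fun z hz => below hc₁ (hp z hz)⟩
    obtain ⟨x, y, hx, hy, hxy⟩ := hL v c₁ c₂ hc₁ hc₂ hc
    have hadj : (cordGraph L).Adj x y :=
      ⟨fun h => (disjoint_leafSet_of_mem_children hc₁ hc₂ hc).notMem_of_mem_left hx (h ▸ hy), hxy⟩
    obtain ⟨p, hp⟩ := ih c₁ hc₁ ha₁ hx
    obtain ⟨q, hq⟩ := ih c₂ hc₂ hy hb₂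
    refine ⟨p.append (.cons hadj q), fun z hz => ?_⟩
    rcases (p.mem_support_append_iff _).1 hz with hz | hz
    · exact below hc₁ (hp z hz)
    · rcases List.mem_cons.1 hz with rfl | hz
      · exact below hc₁ hx
      · exact below hc₂ (hq z hz)

theorem IsTopoLasso.connected_cordGraph {L : Set (Set X)} (hL : T.IsTopoLasso L) :
    (cordGraph L).Connected :=
  have : Nonempty X := (T.leafSet_nonempty T.root).to_subtype.map Subtype.val
  ⟨fun _ _ => (hL.exists_walk T.root (T.reaches _) (T.reaches _)).elim fun p _ => ⟨p⟩⟩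

end XTree

section Graph

open SimpleGraph

variable {α : Type} {G : SimpleGraph α}

theorem GoodSet.exists_isBlock_superset [Finite α] {B : Set α} (hB : GoodSet G B) :
    ∃ C, IsBlock G C ∧ B ⊆ C := by
  obtain ⟨C, ⟨hC, hBC⟩, hmax⟩ := Set.Finite.exists_maximalFor Set.ncard
    {C : Set α | GoodSet G C ∧ B ⊆ C} (Set.toFinite _) ⟨B, hB, subset_rfl⟩
  refine ⟨C, ⟨hC, fun D hD hCD => ?_⟩, hBC⟩
  exact Set.eq_of_subset_of_ncard_le hCD
    (hmax ⟨hD, hBC.trans hCD⟩ (Set.ncard_le_ncard hCD)) (Set.toFinite _)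

theorem SimpleGraph.Walk.IsCycle.connected_induce_support_sdiff {v : α} {c : G.Walk v v}
    (hc : c.IsCycle) : (G.induce ({x | x ∈ c.support} \ {v})).Connected := by
  -- `c.tail.reverse.tail` runs through all vertices of `c` except `v`.
  set p := c.tail.reverse
  have hp : ¬ p.Nil := by
    rw [Walk.not_nil_iff_lt_length, Walk.length_reverse, Walk.length_tail]
    have := hc.three_le_length
    omega
  have hv : v ∉ p.tail.support := by
    have := hc.isPath_tail.reverse.support_nodup
    rw [← p.cons_support_tail hp] at this
    exact (List.nodup_cons.1 this).1
  have hsupp : {x | x ∈ c.support} \ {v} = {x | x ∈ p.tail.support} := by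
    ext x
    rw [Set.mem_sdiff, Set.mem_ofPred_eq, Set.mem_ofPred_eq, Set.mem_singleton_iff,
      ← c.cons_support_tail hc.not_nil, List.mem_cons, ← List.mem_reverse,
      ← Walk.support_reverse, ← p.cons_support_tail hp, List.mem_cons]
    constructor
    · rintro ⟨h | h | h, hx⟩ <;> first | exact absurd h hx | exact h
    · exact fun h => ⟨Or.inr (Or.inr h), fun hx => hv (hx ▸ h)⟩
  rw [hsupp]
  exact p.tail.connected_induce_support

theorem SimpleGraph.Walk.IsCycle.goodSet_support {v : α} {c : G.Walk v v} (hc : c.IsCycle) :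
    GoodSet G {x | x ∈ c.support} := by
  refine ⟨⟨v, c.start_mem_support⟩, c.connected_induce_support, fun w hw _ => ?_⟩
  have hrot : {x | x ∈ (c.rotate w hw).support} = {x | x ∈ c.support} :=
    Set.ext fun x => c.mem_support_rotate_iff w hw
  rw [← hrot]
  exact ((Walk.isCycle_rotate hw).2 hc).connected_induce_support_sdiff

theorem IsBlockGraph.isClique_support_of_isCycle [Finite α] (hG : IsBlockGraph G) {v : α}
    {c : G.Walk v v} (hc : c.IsCycle) : G.IsClique {x | x ∈ c.support} := by
  obtain ⟨B, hB, hcB⟩ := hc.goodSet_support.exists_isBlock_superset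
  exact (hG B hB).subset hcB

theorem IsBlockGraph.adj_of_walk_not_mem_support [Finite α] (hG : IsBlockGraph G) {u v w : α}
    (huv : G.Adj u v) (huw : G.Adj u w) (hwv : w ≠ v) (p : G.Walk w v) (hu : u ∉ p.support) :
    G.Adj w v := by
  have hu' : u ∉ p.bypass.support := fun h => hu (p.support_bypass_subset_support h)
  have hcyc : (Walk.cons huv.symm (.cons huw p.bypass)).IsCycle := by
    refine (Walk.cons_isCycle_iff _ _).2 ⟨p.bypass_isPath.cons hu', ?_⟩
    rw [Walk.edges_cons, List.mem_cons, not_or]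
    refine ⟨fun h => hwv ?_, fun h => hu' (p.bypass.snd_mem_support_of_mem_edges h)⟩
    rcases Sym2.eq_iff.1 h with ⟨hvu, -⟩ | ⟨hvw, -⟩
    · exact absurd hvu.symm huv.ne
    · exact hvw.symm
  exact hG.isClique_support_of_isCycle hcyc (by simp) (by simp) hwv

theorem ClawFree.induce (hG : ClawFree G) (s : Set α) : ClawFree (G.induce s) :=
  fun ⟨v, a, b, c, hab, hac, hbc, hva, hvb, hvc, hab', hac', hbc'⟩ =>
    hG ⟨v, a, b, c, Subtype.coe_ne_coe.2 hab, Subtype.coe_ne_coe.2 hac,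
      Subtype.coe_ne_coe.2 hbc, hva, hvb, hvc, hab', hac', hbc'⟩

theorem GoodSet.image_val {s : Set α} {B : Set s} (hB : GoodSet (G.induce s) B) :
    GoodSet G (Subtype.val '' B) := by
  have hconn : ∀ {C : Set s}, ((G.induce s).induce C).Connected →
      (G.induce (Subtype.val '' C)).Connected := fun {C} h =>
    (show (G.induce s).induce C ≃g G.induce (Subtype.val '' C) from
      ⟨Equiv.Set.image _ C Subtype.val_injective, Iff.rfl⟩).connected_iff.1 h
  obtain ⟨hne, hBconn, hdel⟩ := hB
  refine ⟨hne.image _, hconn hBconn, ?_⟩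
  rintro _ ⟨v, hv, rfl⟩ hne'
  rw [← Set.image_singleton, ← Set.image_sdiff Subtype.val_injective] at hne' ⊢
  exact hconn (hdel v hv hne'.of_image)

theorem IsBlockGraph.induce [Finite α] (hG : IsBlockGraph G) (s : Set α) :
    IsBlockGraph (G.induce s) := by
  intro B hB a ha b hb hab
  obtain ⟨C, hC, hBC⟩ := hB.1.image_val.exists_isBlock_superset
  exact hG C hC (hBC ⟨a, ha, rfl⟩) (hBC ⟨b, hb, rfl⟩) (Subtype.coe_ne_coe.2 hab)

theorem SimpleGraph.Reachable.exists_walk_support_subset_of_induce {s : Set α} {a b : s}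
    (h : (G.induce s).Reachable a b) : ∃ p : G.Walk a b, ∀ z ∈ p.support, z ∈ s := by
  obtain ⟨p⟩ := h
  have hp : ∀ z ∈ (p.map (Embedding.induce s).toHom).support, z ∈ s := by
    intro z hz
    rw [Walk.support_map, List.mem_map] at hz
    obtain ⟨w, -, rfl⟩ := hz
    exact w.2
  exact ⟨_, hp⟩

end Graph

theorem pair_mem_restrictLasso_iff {X : Type} {Y : Set X} {L : Set (Set X)} {a b : Y} :
    ({a, b} : Set Y) ∈ restrictLasso Y L ↔ a ≠ b ∧ ({(a : X), (b : X)} : Set X) ∈ L := by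
  constructor
  · rintro ⟨a', b', hab', hpair, hL⟩
    rcases Set.pair_eq_pair_iff.1 hpair with ⟨rfl, rfl⟩ | ⟨rfl, rfl⟩
    · exact ⟨hab', hL⟩
    · exact ⟨hab'.symm, Set.pair_comm (a : X) b ▸ hL⟩
  · exact fun ⟨hab, hL⟩ => ⟨a, b, hab, rfl, hL⟩

theorem cordGraph_restrictLasso {X : Type} (Y : Set X) (L : Set (Set X)) :
    cordGraph (restrictLasso Y L) = (cordGraph L).induce Y := by
  ext a b
  simp only [SimpleGraph.comap_adj, Function.Embedding.coe_subtype, cordGraph,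
    pair_mem_restrictLasso_iff, Subtype.coe_ne_coe, and_self_left]

namespace XTree

variable {X V : Type} {T : XTree X V} {L : Set (Set X)}

theorem IsMinTopoLasso.eq_of_crossAt (hmin : T.IsMinTopoLasso L) {a b a' b' : X}
    {u c₁ c₂ : V} (hab : ({a, b} : Set X) ∈ L) (h : T.CrossAt a b u c₁ c₂)
    (hab' : ({a', b'} : Set X) ∈ L) (h' : T.CrossAt a' b' u c₁ c₂) : a = a' ∧ b = b' := by
  by_cases heq : ({a, b} : Set X) = {a', b'}
  · rcases Set.pair_eq_pair_iff.1 heq with hab | ⟨rfl, -⟩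
    · exact hab
    · exact absurd h'.mem_right (h.disjoint.notMem_of_mem_left h.mem_left)
  -- Otherwise the cord `ab` could be removed from the lasso.
  have hlasso : T.IsTopoLasso (L \ {{a, b}}) := by
    intro v d₁ d₂ hd₁ hd₂ hne
    obtain ⟨p, q, hp, hq, hpq⟩ := hmin.1 v d₁ d₂ hd₁ hd₂ hne
    have hd : T.CrossAt p q v d₁ d₂ := ⟨hd₁, hd₂, hne, hp, hq⟩
    by_cases hc : ({p, q} : Set X) = {a, b}
    · rcases Set.pair_eq_pair_iff.1 hc with ⟨rfl, rfl⟩ | ⟨rfl, rfl⟩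
      · obtain ⟨-, rfl, rfl⟩ := h.unique hd
        exact ⟨a', b', h'.mem_left, h'.mem_right, hab', Ne.symm heq⟩
      · obtain ⟨-, rfl, rfl⟩ := h.symm.unique hd
        refine ⟨b', a', h'.mem_right, h'.mem_left, Set.pair_comm a' b' ▸ hab', ?_⟩
        rw [Set.mem_singleton_iff, Set.pair_comm b' a']
        exact Ne.symm heq
    · exact ⟨p, q, hp, hq, hpq, hc⟩
  exact absurd rfl ((hmin.2 _ Set.sdiff_subset hlasso ▸ hab).2)

theorem IsMinTopoLasso.mem_of_crossAt [Finite X] [Finite V] (hmin : T.IsMinTopoLasso L)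
    (hbg : IsBlockGraph (cordGraph L)) {Y : Set X} (hY : ((cordGraph L).induce Y).Connected)
    {m₁ m₂ : X} {u c₁ c₂ : V} (hm : ({m₁, m₂} : Set X) ∈ L) (hcross : T.CrossAt m₁ m₂ u c₁ c₂)
    {p q : X} (hp : p ∈ T.leafSet c₁) (hpY : p ∈ Y) (hq : q ∈ T.leafSet c₂) (hqY : q ∈ Y) :
    m₁ ∈ Y := by
  -- If `m₁ ∉ Y`, its neighbour `x` on a path from `m₁` to `p` inside the subtree of `c₁` reaches
  -- `m₂` avoiding `m₁`, through `Y` and the subtree of `c₂`. In a block graph this makes `x m₂`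
  -- an edge, i.e. a second cord between the two subtrees.
  by_contra hm₁
  obtain ⟨σ, hσ⟩ := hmin.1.exists_walk c₁ hcross.mem_left hp
  obtain ⟨x, hm₁x, ρ, hρ⟩ :=
    σ.bypass.exists_eq_cons_of_ne (fun h : m₁ = p => hm₁ (h ▸ hpY))
  have hρ₁ : m₁ ∉ ρ.support := by
    have := σ.bypass_isPath
    rw [hρ, SimpleGraph.Walk.cons_isPath_iff] at this
    exact this.2
  have hx : x ∈ T.leafSet c₁ :=
    hσ x (σ.support_bypass_subset_support (hρ ▸ List.mem_cons_of_mem _ ρ.start_mem_support))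
  obtain ⟨R, hR⟩ := (hY.preconnected ⟨p, hpY⟩ ⟨q, hqY⟩).exists_walk_support_subset_of_induce
  obtain ⟨τ, hτ⟩ := hmin.1.exists_walk c₂ hq hcross.mem_right
  have hxm₂ : x ≠ m₂ := fun h => hcross.disjoint.notMem_of_mem_left hx (h ▸ hcross.mem_right)
  have hadj := hbg.adj_of_walk_not_mem_support ⟨hcross.ne_of_mem, hm⟩ hm₁x hxm₂
    (ρ.append (R.append τ)) (fun h => by
      rcases (ρ.mem_support_append_iff _).1 h with h | h
      · exact hρ₁ h
      rcases (SimpleGraph.Walk.mem_support_append_iff _ _).1 h with h | h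
      · exact hm₁ (hR _ h)
      · exact hcross.disjoint.notMem_of_mem_left hcross.mem_left (hτ _ h))
  exact hm₁x.ne (hmin.eq_of_crossAt hadj.2 ⟨hcross.mem_children_left,
    hcross.mem_children_right, hcross.ne, hx, hcross.mem_right⟩ hm hcross).1.symm

end XTree

namespace IsRestriction

open XTree

variable {X V W : Type} {Y : Set X} {T : XTree X V} {S : XTree Y W}

theorem exists_image_leafSet_eq (hres : IsRestriction Y T S) (w : W) :
    ∃ v, Subtype.val '' S.leafSet w = T.leafSet v ∩ Y :=
  ((hres _ (Subtype.coe_image_subset Y _)).1 ⟨w, rfl⟩).2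

theorem exists_leafSet_inter_eq (hres : IsRestriction Y T S) {v : V}
    (hv : (T.leafSet v ∩ Y).Nonempty) : ∃ w, Subtype.val '' S.leafSet w = T.leafSet v ∩ Y :=
  ((hres _ Set.inter_subset_right).2 ⟨hv, v, rfl⟩).imp fun _ => Eq.symm

variable {a b : Y} {w d₁ d₂ : W} {u c₁ c₂ : V}

theorem leafSet_inter_subset (hres : IsRestriction Y T S) (hS : S.CrossAt a b w d₁ d₂)
    (hT : T.CrossAt a b u c₁ c₂) : T.leafSet c₁ ∩ Y ⊆ Subtype.val '' S.leafSet d₁ := by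
  obtain ⟨z, hz⟩ := hres.exists_leafSet_inter_eq ⟨a, hT.mem_left, a.2⟩
  have hmem : ∀ {y : Y}, y ∈ S.leafSet z ↔ (y : X) ∈ T.leafSet c₁ := fun {y} => by
    rw [← Subtype.val_injective.mem_set_image, hz]
    exact and_iff_left y.2
  rw [← hz]
  exact Set.image_mono (leafSet_mono
    (hS.desc_of_mem (hmem.2 hT.mem_left) fun h => hT.not_mem_left (hmem.1 h)))

theorem image_leafSet_subset (hres : IsRestriction Y T S) (hS : S.CrossAt a b w d₁ d₂)
    (hT : T.CrossAt a b u c₁ c₂) : Subtype.val '' S.leafSet d₁ ⊆ T.leafSet c₁ := by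
  obtain ⟨z, hz⟩ := hres.exists_image_leafSet_eq d₁
  have hmem : ∀ {y : Y}, y ∈ S.leafSet d₁ ↔ (y : X) ∈ T.leafSet z := fun {y} => by
    rw [← Subtype.val_injective.mem_set_image, hz]
    exact and_iff_left y.2
  rw [hz]
  exact Set.inter_subset_left.trans (leafSet_mono
    (hT.desc_of_mem (hmem.1 hS.mem_left) fun h => hS.not_mem_left (hmem.2 h)))

variable [Finite V] [Finite W] {L : Set (Set X)}

theorem isTopoLasso_restrictLasso [Finite X] (hres : IsRestriction Y T S)
    (hmin : T.IsMinTopoLasso L) (hbg : IsBlockGraph (cordGraph L))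
    (hY : ((cordGraph L).induce Y).Connected) : S.IsTopoLasso (restrictLasso Y L) := by
  intro w d₁ d₂ hd₁ hd₂ hne
  obtain ⟨a, ha⟩ := S.leafSet_nonempty d₁
  obtain ⟨b, hb⟩ := S.leafSet_nonempty d₂
  have hS : S.CrossAt a b w d₁ d₂ := ⟨hd₁, hd₂, hne, ha, hb⟩
  obtain ⟨u, c₁, c₂, hT⟩ := exists_crossAt (T := T) (Subtype.coe_ne_coe.2 hS.ne_of_mem)
  obtain ⟨m₁, m₂, hm₁, hm₂, hm⟩ :=
    hmin.1 u c₁ c₂ hT.mem_children_left hT.mem_children_right hT.ne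
  have hcross : T.CrossAt m₁ m₂ u c₁ c₂ := { hT with mem_left := hm₁, mem_right := hm₂ }
  have hm₁Y := hmin.mem_of_crossAt hbg hY hm hcross hT.mem_left a.2 hT.mem_right b.2
  have hm₂Y := hmin.mem_of_crossAt hbg hY (Set.pair_comm m₁ m₂ ▸ hm) hcross.symm
    hT.mem_right b.2 hT.mem_left a.2
  have h₁ : (⟨m₁, hm₁Y⟩ : Y) ∈ S.leafSet d₁ :=
    Subtype.val_injective.mem_set_image.1 (hres.leafSet_inter_subset hS hT ⟨hm₁, hm₁Y⟩)
  have h₂ : (⟨m₂, hm₂Y⟩ : Y) ∈ S.leafSet d₂ :=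
    Subtype.val_injective.mem_set_image.1
      (hres.leafSet_inter_subset hS.symm hT.symm ⟨hm₂, hm₂Y⟩)
  exact ⟨_, _, h₁, h₂, pair_mem_restrictLasso_iff.2
    ⟨fun h => hS.disjoint.notMem_of_mem_left h₁ (h ▸ h₂), hm⟩⟩

theorem restrictLasso_subset (hres : IsRestriction Y T S) (hmin : T.IsMinTopoLasso L)
    {L' : Set (Set Y)} (hL' : S.IsTopoLasso L') (hsub : L' ⊆ restrictLasso Y L) :
    restrictLasso Y L ⊆ L' := by
  rintro _ ⟨a, b, hab, rfl, hL⟩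
  obtain ⟨w, d₁, d₂, hS⟩ := exists_crossAt (T := S) hab
  obtain ⟨u, c₁, c₂, hT⟩ := exists_crossAt (T := T) (Subtype.coe_ne_coe.2 hab)
  obtain ⟨p, q, hp, hq, hpq⟩ := hL' w d₁ d₂ hS.mem_children_left hS.mem_children_right hS.ne
  have hcross : T.CrossAt p q u c₁ c₂ :=
    { hT with
      mem_left := hres.image_leafSet_subset hS hT ⟨p, hp, rfl⟩
      mem_right := hres.image_leafSet_subset hS.symm hT.symm ⟨q, hq, rfl⟩ }
  obtain ⟨hap, hbq⟩ :=
    hmin.eq_of_crossAt hL hT (pair_mem_restrictLasso_iff.1 (hsub hpq)).2 hcross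
  rwa [Subtype.ext hap, Subtype.ext hbq]

theorem isMinTopoLasso_restrictLasso [Finite X] (hres : IsRestriction Y T S)
    (hmin : T.IsMinTopoLasso L) (hbg : IsBlockGraph (cordGraph L))
    (hY : ((cordGraph L).induce Y).Connected) : S.IsMinTopoLasso (restrictLasso Y L) :=
  ⟨hres.isTopoLasso_restrictLasso hmin hbg hY, fun _ hsub hL' =>
    hsub.antisymm (hres.restrictLasso_subset hmin hL' hsub)⟩

end IsRestriction

theorem stmt19_general {X V W : Type} [Fintype X] [Fintype V] [Fintype W] (T : XTree X V)
    (L : Set (Set X)) (hmin : T.IsMinTopoLasso L) (hbg : IsBlockGraph (cordGraph L))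
    (hcf : ClawFree (cordGraph L)) (Y : Set X) (S : XTree (↥Y) W) (hres : IsRestriction Y T S) :
    (S.IsMinTopoLasso (restrictLasso Y L) ∧
        IsBlockGraph (cordGraph (restrictLasso Y L)) ∧
        ClawFree (cordGraph (restrictLasso Y L))) ↔
      ((cordGraph L).induce Y).Connected := by
  rw [cordGraph_restrictLasso]
  constructor
  · rintro ⟨⟨hlasso, -⟩, -, -⟩
    exact cordGraph_restrictLasso Y L ▸ hlasso.connected_cordGraph
  · exact fun hY => ⟨hres.isMinTopoLasso_restrictLasso hmin hbg hY, hbg.induce Y, hcf.induce Y⟩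

/-- for a distinguished minimal topological lasso `L` of `T` and
`Y ⊆ X` with `|Y| ≥ 3`, the restriction `L|_Y` is a distinguished minimal topological
lasso for `T|_Y` iff the subgraph of `Γ(L)` induced on `Y` is connected. -/
theorem stmt19 {X V W : Type} [Fintype X] [Fintype V] [Fintype W] (T : XTree X V)
    (hph : T.IsPhylo) (hX : 3 ≤ Fintype.card X)
    (L : Set (Set X)) (hc : ∀ c ∈ L, IsCord c) (hcov : ∀ x : X, ∃ c ∈ L, x ∈ c)
    (hmin : T.IsMinTopoLasso L) (hbg : IsBlockGraph (cordGraph L))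
    (hcf : ClawFree (cordGraph L))
    (Y : Set X) (hY : 3 ≤ Y.ncard)
    (S : XTree (↥Y) W) (hSph : S.IsPhylo) (hres : IsRestriction Y T S) :
    (S.IsMinTopoLasso (restrictLasso Y L) ∧
        IsBlockGraph (cordGraph (restrictLasso Y L)) ∧
        ClawFree (cordGraph (restrictLasso Y L))) ↔
      ((cordGraph L).induce Y).Connected :=
  stmt19_general T L hmin hbg hcf Y S hres
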